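/- In the Setup, let K : V → V denote the linear map acting on U_i as multiplication by q^{2i−d} for 0 ≤ i ≤ d (so A = R + K and A* = L + K⁻¹). Assume additionally: A and A* satisfy the cubic q-Serre relations; dim U_0 = 1; σ_0, …, σ_d ∈ 𝕂 are scalars such that Lⁱ Rⁱ u = σ_i u for all u ∈ U_0 and 0 ≤ i ≤ d; and the only subspaces of V invariant under each of R, L and K are 0 and V. Then the following are equivalent: (i) the only subspaces W ⊆ V with AW ⊆ W and A*W ⊆ W are 0 and V; (ii) ∑_{i=0}^{d} (−1)ⁱ σ_i qⁱ ([i]_q!)⁻² (q⁻¹(q − q⁻¹)⁻²)ⁱ ≠ 0. -/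

import Mathlib

noncomputable section

/-- `[n]_q = (qⁿ − q⁻ⁿ)/(q − q⁻¹)`. -/
def qInt {K : Type*} [Field K] (q : K) (n : ℕ) : K :=
  (q ^ n - q⁻¹ ^ n) / (q - q⁻¹)

/-- `[n]_q! = [n]_q [n−1]_q ⋯ [1]_q`. -/
def qFac {K : Type*} [Field K] (q : K) (n : ℕ) : K :=
  ∏ k ∈ Finset.range n, qInt q (k + 1)

/-- `X, Y` satisfy the cubic `q`-Serre relations. -/
def QSerre {K V : Type*} [Field K] [AddCommGroup V] [Module K V]
    (q : K) (X Y : Module.End K V) : Prop :=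
  X ^ 3 * Y - qInt q 3 • (X ^ 2 * Y * X) + qInt q 3 • (X * Y * X ^ 2) - Y * X ^ 3 = 0 ∧
  Y ^ 3 * X - qInt q 3 • (Y ^ 2 * X * Y) + qInt q 3 • (Y * X * Y ^ 2) - X * Y ^ 3 = 0

/-- `U 0, …, U d` is a decomposition of `V` with diameter `d`: the `U i` with `i ≤ d` are nonzero,
`U i = 0` for `i > d`, and `V` is the (internal) direct sum of the `U i`. -/
def IsDecomposition {K V : Type*} [Field K] [AddCommGroup V] [Module K V]
    (d : ℕ) (U : ℕ → Submodule K V) : Prop :=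
  (∀ i, i ≤ d → U i ≠ ⊥) ∧ (∀ i, d < i → U i = ⊥) ∧
  (⨆ i, U i) = ⊤ ∧
  ∀ i, Disjoint (U i) (⨆ j, ⨆ _ : j ≠ i, U j)

/-- The Setup: `U 0, …, U d` is a decomposition of `V`; `R` is a raising map, `L` a lowering map,
and `A` (resp. `As`) acts on `U i` as `R + q^{2i−d}` (resp. `L + q^{d−2i}`). -/
def TDSetup {K V : Type*} [Field K] [AddCommGroup V] [Module K V]
    (q : K) (d : ℕ) (U : ℕ → Submodule K V) (R L A As : Module.End K V) : Prop :=
  IsDecomposition d U ∧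
  (∀ i, Submodule.map R (U i) ≤ U (i + 1)) ∧
  (∀ i, Submodule.map L (U (i + 1)) ≤ U i) ∧
  (∀ u ∈ U 0, L u = 0) ∧
  (∀ i, ∀ u ∈ U i, A u = R u + q ^ (2 * (i : ℤ) - d) • u) ∧
  (∀ i, ∀ u ∈ U i, As u = L u + q ^ ((d : ℤ) - 2 * (i : ℤ)) • u)

/-- `E i` is, for each `i`, the projection onto `P i` determined by the decomposition of `V` into
the subspaces `P j`: it is the identity on `P i` and zero on each `P j` with `j ≠ i`. -/
def IsProjFamily {K V : Type*} [Field K] [AddCommGroup V] [Module K V]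
    (P : ℕ → Submodule K V) (E : ℕ → Module.End K V) : Prop :=
  ∀ i, (∀ v ∈ P i, E i v = v) ∧ ∀ j, j ≠ i → ∀ v ∈ P j, E i v = 0

/-!
Write `θᵢ = q^(2i-d)` and `θ*ᵢ = q^(d-2i)`; these are pairwise distinct. As `A - θᵢ` maps
`Uᵢ + ⋯ + U_d` into `U_(i+1) + ⋯ + U_d` and `A* - θ*ᵢ` maps `U₀ + ⋯ + Uᵢ` into `U₀ + ⋯ + U_(i-1)`,
both `A` and `A*` are diagonalizable, with eigenspaces `Vᵢ` and `V*ᵢ`, and `V*₀ = U₀`. Let `Eᵢ` be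
the projections onto the `Uᵢ` and `f = ∑ c*ᵢ Lⁱ Eᵢ` the projection onto `V*₀` along the other `V*ᵢ`.
A vector `x ∈ V₀` has components `Eᵢ x = cᵢ Rⁱ E₀ x`, so `f x = ε E₀ x` with `ε` the scalar of (ii).

If `ε ≠ 0` and `W ≠ 0` is invariant, the components `Eᵢ W` span an `R, L, K`-invariant subspace,
which is `V`, so `E₀ w ≠ 0` for some `w ∈ W`. Projecting `w` onto `V₀`, then onto `V*₀ = U₀`, by
polynomials in `A` and `A*` keeps first `E₀` and then `f` nonzero: `W` contains a nonzero vector of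
`U₀`. The span of the homogeneous vectors of `W` is then `R, L, K`-invariant and nonzero, hence `V`.

If `ε = 0`, the `q`-Serre relations make `A*` map `Vⱼ` into `V_(j-1) + Vⱼ + V_(j+1)` and `A` map
`V*ⱼ` into `V*_(j-1) + V*ⱼ + V*_(j+1)`, so `∑ₖ (V₀ + ⋯ + Vₖ) ∩ (V*ₖ + ⋯ + V*_d)` is invariant under
`A` and `A*`. It contains `V₀ ≠ 0` and lies in `ker f`, which misses `U₀`.
-/

open Polynomial Module

section

variable {K V : Type*} [Field K] [AddCommGroup V] [Module K V]

lemma zpow_injective_of_pow_ne_one {G₀ : Type*} [GroupWithZero G₀] {q : G₀} (hq : q ≠ 0)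
    (hq1 : ∀ n : ℕ, 0 < n → q ^ n ≠ 1) : Function.Injective (q ^ · : ℤ → G₀) := by
  have h : Function.Injective fun n : ℤ => Units.mk0 q hq ^ n :=
    injective_zpow_iff_not_isOfFinOrder.mpr fun hfin => by
      obtain ⟨n, hn, h⟩ := isOfFinOrder_iff_pow_eq_one.mp hfin
      exact hq1 n hn (by simpa [Units.ext_iff] using h)
  intro a b hab
  exact h (Units.ext (by simpa using hab))

lemma aeval_X_sub_C_eq_sub_smul_one (f : End K V) (a : K) : aeval f (X - C a) = f - a • 1 := by
  rw [map_sub, aeval_X, aeval_C, Algebra.algebraMap_eq_smul_one]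

lemma ker_aeval_X_sub_C_eq_eigenspace (f : End K V) (a : K) :
    LinearMap.ker (aeval f (X - C a)) = f.eigenspace a := by
  rw [aeval_X_sub_C_eq_sub_smul_one, End.eigenspace_def]

lemma ker_aeval_prod_X_sub_C_eq_iSup_eigenspace {ι : Type*} (f : End K V) (s : Finset ι)
    {μ : ι → K} (hμ : Set.InjOn μ s) :
    LinearMap.ker (aeval f (∏ i ∈ s, (X - C (μ i)))) = ⨆ i ∈ s, f.eigenspace (μ i) := by
  classical
  induction s using Finset.induction_on with
  | empty => simp [End.one_eq_id]
  | insert a s ha ih =>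
    have hcop : IsCoprime (X - C (μ a)) (∏ i ∈ s, (X - C (μ i))) :=
      IsCoprime.prod_right fun i hi => isCoprime_X_sub_C_of_isUnit_sub <| IsUnit.mk0 _ <|
        sub_ne_zero.mpr fun h => ha (hμ.eq_iff (by simp) (by simp [hi]) |>.mp h ▸ hi)
    rw [Finset.prod_insert ha, ← Polynomial.sup_ker_aeval_eq_ker_aeval_mul_of_coprime _ hcop,
      ker_aeval_X_sub_C_eq_eigenspace, ih (hμ.mono (by simp)), Finset.iSup_insert]

lemma eigenspace_eq_bot_of_aeval_eq_zero {f : End K V} {p : K[X]} (hp : aeval f p = 0) {ν : K}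
    (hν : p.eval ν ≠ 0) : f.eigenspace ν = ⊥ := by
  refine (Submodule.eq_bot_iff _).mpr fun x hx => ?_
  have := End.aeval_apply_of_mem_apply_eq_smul (p := p) (End.mem_eigenspace_iff.mp hx)
  rw [hp, LinearMap.zero_apply, eq_comm, smul_eq_zero] at this
  exact this.resolve_left hν

lemma aeval_prod_X_sub_C_eq_zero_of_flag {f : End K V} {μ : ℕ → K} {F : ℕ → Submodule K V}
    {n : ℕ} (h0 : F 0 = ⊤) (hn : F n = ⊥)
    (hF : ∀ k < n, F k ≤ (F (k + 1)).comap (f - μ k • 1)) :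
    aeval f (∏ k ∈ Finset.range n, (X - C (μ k))) = 0 := by
  have key : ∀ m ≤ n, ∀ x, aeval f (∏ k ∈ Finset.range m, (X - C (μ k))) x ∈ F m := by
    intro m hm x
    induction m with
    | zero => simp [h0]
    | succ m ih =>
      rw [Finset.prod_range_succ_comm, aeval_mul, End.mul_apply, aeval_X_sub_C_eq_sub_smul_one]
      exact hF m hm (ih (by omega))
  ext x
  simpa [hn] using key n le_rfl x

lemma LinearMap.comp_aeval_eq_eval_smul {M : Type*} [AddCommGroup M] [Module K M]
    {f : End K V} {g : V →ₗ[K] M} {μ : K} (hg : g ∘ₗ f = μ • g) (p : K[X]) :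
    g ∘ₗ aeval f p = p.eval μ • g := by
  induction p using Polynomial.induction_on with
  | C a => ext; simp [Algebra.algebraMap_eq_smul_one]
  | add p r hp hr => simp [hp, hr, LinearMap.comp_add, add_smul]
  | monomial n a ih =>
    rw [pow_succ, ← mul_assoc, aeval_mul, aeval_X, End.mul_eq_comp, ← LinearMap.comp_assoc, ih,
      LinearMap.smul_comp, hg, smul_smul]
    simp [mul_assoc]

lemma LinearMap.apply_eq_zero_of_comp_eq_smul {M : Type*} [AddCommGroup M] [Module K M]
    {f : End K V} {g : V →ₗ[K] M} {μ ν : K} (hg : g ∘ₗ f = μ • g) (hνμ : ν ≠ μ)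
    {x : V} (hx : x ∈ f.eigenspace ν) : g x = 0 := by
  have h := congr($hg x)
  rw [LinearMap.comp_apply, End.mem_eigenspace_iff.mp hx, map_smul, LinearMap.smul_apply,
    ← sub_eq_zero, ← sub_smul] at h
  exact (smul_eq_zero.mp h).resolve_left (sub_ne_zero.mpr hνμ)

lemma sub_inv_ne_zero_of_sq_ne_one {q : K} (hq : q ≠ 0) (hq2 : q ^ 2 ≠ 1) :
    q - q⁻¹ ≠ 0 := by
  intro h
  apply hq2
  field_simp at h
  linear_combination h

lemma qFac_succ (q : K) (n : ℕ) : qFac q (n + 1) = qFac q n * qInt q (n + 1) :=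
  Finset.prod_range_succ _ _

lemma qInt_three {q : K} (hq : q ≠ 0) (hq2 : q ^ 2 ≠ 1) :
    qInt q 3 = q ^ 2 + 1 + q⁻¹ ^ 2 := by
  rw [qInt, div_eq_iff (sub_inv_ne_zero_of_sq_ne_one hq hq2)]
  field_simp
  ring

-- Applied to a `μ`-eigenvector `x` of `S`, the cubic `q`-Serre relation says that this cubic
-- polynomial in `S` kills `T x`.
lemma X_sub_C_mul_X_sub_C_mul_X_sub_C_eq {q : K} (hq : q ≠ 0) (hq2 : q ^ 2 ≠ 1) (μ : K) :
    (X - C (q ^ 2 * μ)) * (X - C μ) * (X - C (q⁻¹ ^ 2 * μ)) =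
      X ^ 3 - C (qInt q 3 * μ) * X ^ 2 + C (qInt q 3 * μ ^ 2) * X - C (μ ^ 3) := by
  have hqq : C q * C q⁻¹ = (1 : K[X]) := by rw [← C_mul, mul_inv_cancel₀ hq, C_1]
  simp only [qInt_three hq hq2, C_mul, C_add, C_pow, C_1]
  linear_combination (C q * C q⁻¹ + 1) * (X - C μ) * C μ ^ 2 * hqq

lemma map_eigenspace_le_of_qSerre {S T : End K V} {q μ : K} (hq : q ≠ 0) (hq4 : q ^ 4 ≠ 1)
    (hμ : μ ≠ 0)
    (hST : S ^ 3 * T - qInt q 3 • (S ^ 2 * T * S) + qInt q 3 • (S * T * S ^ 2) -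
      T * S ^ 3 = 0) :
    (S.eigenspace μ).map T ≤
      S.eigenspace (q ^ 2 * μ) ⊔ S.eigenspace μ ⊔ S.eigenspace (q⁻¹ ^ 2 * μ) := by
  classical
  have hq2 : q ^ 2 ≠ 1 := fun h => hq4 (by rw [show 4 = 2 * 2 by rfl, pow_mul, h, one_pow])
  have h₁₂ : q ^ 2 * μ ≠ μ := fun h => hq2 (mul_eq_right₀ hμ |>.mp h)
  have h₂₃ : μ ≠ q⁻¹ ^ 2 * μ := fun h => hq2 <| by
    rw [← inv_eq_one, ← inv_pow]
    exact mul_eq_right₀ hμ |>.mp h.symm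
  have h₁₃ : q ^ 2 * μ ≠ q⁻¹ ^ 2 * μ := fun h => hq4 <| by
    have h' := mul_right_cancel₀ hμ h
    field_simp at h'
    linear_combination h'
  have hker := ker_aeval_prod_X_sub_C_eq_iSup_eigenspace S
    ({q ^ 2 * μ, μ, q⁻¹ ^ 2 * μ} : Finset K) (μ := id) (Set.injOn_id _)
  simp only [id] at hker
  have hnotin : q ^ 2 * μ ∉ ({μ, q⁻¹ ^ 2 * μ} : Finset K) := by
    rw [Finset.mem_insert, Finset.mem_singleton]
    exact not_or.mpr ⟨h₁₂, h₁₃⟩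
  rw [Finset.prod_insert hnotin, Finset.prod_pair h₂₃, ← mul_assoc,
    X_sub_C_mul_X_sub_C_mul_X_sub_C_eq hq hq2, Finset.iSup_insert, Finset.iSup_insert,
    Finset.iSup_singleton, ← sup_assoc] at hker
  rw [← hker]
  rintro _ ⟨x, hx, rfl⟩
  have h := congr($hST x)
  simp only [LinearMap.sub_apply, LinearMap.add_apply, LinearMap.smul_apply, End.mul_apply,
    pow_succ, pow_zero, one_mul, LinearMap.zero_apply, End.mem_eigenspace_iff.mp hx,
    map_smul] at h
  simp only [LinearMap.mem_ker, map_sub, map_add, map_mul, aeval_X, aeval_C, LinearMap.sub_apply,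
    LinearMap.add_apply, End.mul_apply, pow_succ, pow_zero, one_mul, End.one_apply,
    Algebra.algebraMap_eq_smul_one, LinearMap.smul_apply, smul_mul_assoc]
  linear_combination (norm := module) h

lemma exists_mem_inf_eigenspace_apply_ne_zero {M ι : Type*} [AddCommGroup M] [Module K M]
    {f : End K V} {s : Finset ι} {μ : ι → K} (hμ : Set.InjOn μ s)
    (hf : aeval f (∏ i ∈ s, (X - C (μ i))) = 0) {a : ι} (ha : a ∈ s)
    {g : V →ₗ[K] M} (hg : g ∘ₗ f = μ a • g) {W : Submodule K V} (hW : W ≤ W.comap f)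
    {x : V} (hxW : x ∈ W) (hgx : g x ≠ 0) : ∃ y ∈ W ⊓ f.eigenspace (μ a), g y ≠ 0 := by
  classical
  set p := ∏ i ∈ s.erase a, (X - C (μ i))
  refine ⟨aeval f p x,
    Submodule.mem_inf.mpr ⟨aeval_apply_smul_mem_of_le_comap hxW p f hW, ?_⟩, ?_⟩
  · have h := congr($hf x)
    rw [← Finset.mul_prod_erase s _ ha, aeval_mul, End.mul_apply,
      aeval_X_sub_C_eq_sub_smul_one] at h
    rw [End.mem_eigenspace_iff, ← sub_eq_zero]
    simpa using h
  · rw [← LinearMap.comp_apply, LinearMap.comp_aeval_eq_eval_smul hg, LinearMap.smul_apply]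
    refine smul_ne_zero ?_ hgx
    rw [eval_prod, Finset.prod_ne_zero_iff]
    intro i hi
    rw [eval_sub, eval_X, eval_C, sub_ne_zero]
    exact fun h => (Finset.mem_erase.mp hi).1 (hμ (Finset.mem_of_mem_erase hi) ha h.symm)

def eigenspacesLE (f : End K V) (μ : ℕ → K) (k : ℕ) : Submodule K V :=
  ⨆ (j) (_ : j ≤ k), f.eigenspace (μ j)

def eigenspacesGE (f : End K V) (μ : ℕ → K) (k : ℕ) : Submodule K V :=
  ⨆ (j) (_ : k ≤ j), f.eigenspace (μ j)

variable {f g : End K V} {μ ν : ℕ → K}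

lemma eigenspace_le_eigenspacesLE {j k : ℕ} (h : j ≤ k) :
    f.eigenspace (μ j) ≤ eigenspacesLE f μ k :=
  le_iSup₂_of_le j h le_rfl

lemma eigenspace_le_eigenspacesGE {j k : ℕ} (h : k ≤ j) :
    f.eigenspace (μ j) ≤ eigenspacesGE f μ k :=
  le_iSup₂_of_le j h le_rfl

lemma eigenspacesLE_mono : Monotone (eigenspacesLE f μ) := fun _ _ hkl =>
  iSup₂_le fun _ hj => eigenspace_le_eigenspacesLE (hj.trans hkl)

lemma eigenspacesGE_anti : Antitone (eigenspacesGE f μ) := fun _ _ hkl =>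
  iSup₂_le fun _ hj => eigenspace_le_eigenspacesGE (hkl.trans hj)

lemma eigenspacesLE_zero : eigenspacesLE f μ 0 = f.eigenspace (μ 0) :=
  le_antisymm (iSup₂_le fun j hj => by rw [Nat.le_zero.mp hj])
    (eigenspace_le_eigenspacesLE le_rfl)

lemma sub_smul_one_apply_of_mem_eigenspace {x : V} {a b : K} (hx : x ∈ f.eigenspace a) :
    (f - b • 1) x = (a - b) • x := by
  rw [LinearMap.sub_apply, LinearMap.smul_apply, End.one_apply, End.mem_eigenspace_iff.mp hx,
    sub_smul]

lemma map_sub_eigenspacesLE_le (k : ℕ) :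
    (eigenspacesLE f μ (k + 1)).map (f - μ (k + 1) • 1) ≤ eigenspacesLE f μ k := by
  rw [Submodule.map_le_iff_le_comap]
  refine iSup₂_le fun j hj x hx => ?_
  rw [Submodule.mem_comap, sub_smul_one_apply_of_mem_eigenspace hx]
  rcases hj.eq_or_lt with rfl | hlt
  · simp
  · exact Submodule.smul_mem _ _ (eigenspace_le_eigenspacesLE (Nat.lt_succ_iff.mp hlt) hx)

lemma map_sub_eigenspacesGE_le (k : ℕ) :
    (eigenspacesGE f μ k).map (f - μ k • 1) ≤ eigenspacesGE f μ (k + 1) := by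
  rw [Submodule.map_le_iff_le_comap]
  refine iSup₂_le fun j hj x hx => ?_
  rw [Submodule.mem_comap, sub_smul_one_apply_of_mem_eigenspace hx]
  rcases hj.eq_or_lt with rfl | hlt
  · simp
  · exact Submodule.smul_mem _ _ (eigenspace_le_eigenspacesGE hlt hx)

def splitSum (f g : End K V) (μ ν : ℕ → K) : Submodule K V :=
  ⨆ k, eigenspacesLE f μ k ⊓ eigenspacesGE g ν k

lemma inf_le_splitSum (k : ℕ) :
    eigenspacesLE f μ k ⊓ eigenspacesGE g ν k ≤ splitSum f g μ ν :=
  le_iSup (fun k => eigenspacesLE f μ k ⊓ eigenspacesGE g ν k) k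

lemma map_splitSum_le_left
    (hg : ∀ k, (eigenspacesGE g ν (k + 1)).map f ≤ eigenspacesGE g ν k) :
    (splitSum f g μ ν).map f ≤ splitSum f g μ ν := by
  rw [Submodule.map_le_iff_le_comap]
  refine iSup_le fun k x hx => ?_
  obtain ⟨hxf, hxg⟩ := Submodule.mem_inf.mp hx
  rcases k with _ | k
  · rw [eigenspacesLE_zero] at hxf
    rw [Submodule.mem_comap, End.mem_eigenspace_iff.mp hxf]
    exact Submodule.smul_mem _ _ (inf_le_splitSum 0 hx)
  · have hsplit : f x = (f - μ (k + 1) • 1) x + μ (k + 1) • x := by simp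
    rw [Submodule.mem_comap, hsplit]
    refine add_mem (inf_le_splitSum k ⟨map_sub_eigenspacesLE_le k ⟨x, hxf, rfl⟩, ?_⟩)
      (Submodule.smul_mem _ _ (inf_le_splitSum (k + 1) hx))
    rw [LinearMap.sub_apply, LinearMap.smul_apply, End.one_apply]
    exact sub_mem (hg k ⟨x, hxg, rfl⟩)
      (Submodule.smul_mem _ _ (eigenspacesGE_anti k.le_succ hxg))

lemma map_splitSum_le_right
    (hf : ∀ k, (eigenspacesLE f μ k).map g ≤ eigenspacesLE f μ (k + 1)) :
    (splitSum f g μ ν).map g ≤ splitSum f g μ ν := by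
  rw [Submodule.map_le_iff_le_comap]
  refine iSup_le fun k x hx => ?_
  obtain ⟨hxf, hxg⟩ := Submodule.mem_inf.mp hx
  have hsplit : g x = (g - ν k • 1) x + ν k • x := by simp
  rw [Submodule.mem_comap, hsplit]
  refine add_mem (inf_le_splitSum (k + 1) ⟨?_, map_sub_eigenspacesGE_le k ⟨x, hxg, rfl⟩⟩)
    (Submodule.smul_mem _ _ (inf_le_splitSum k hx))
  rw [LinearMap.sub_apply, LinearMap.smul_apply, End.one_apply]
  exact sub_mem (hf k ⟨x, hxf, rfl⟩) (Submodule.smul_mem _ _ (eigenspacesLE_mono k.le_succ hxf))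

lemma IsProjFamily.apply_of_mem {U : ℕ → Submodule K V} {E : ℕ → End K V}
    (hE : IsProjFamily U E) {i j : ℕ} {x : V} (hx : x ∈ U j) :
    E i x = if j = i then x else 0 := by
  split_ifs with h
  · exact (hE i).1 x (h ▸ hx)
  · exact (hE i).2 j h x hx

lemma IsDecomposition.exists_isProjFamily {d : ℕ} {U : ℕ → Submodule K V}
    (hU : IsDecomposition d U) : ∃ E : ℕ → End K V, IsProjFamily U E := by
  classical
  let _ := (DirectSum.isInternal_submodule_of_iSupIndep_of_iSup_eq_top hU.2.2.2
    hU.2.2.1).chooseDecomposition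
  refine ⟨fun i => (U i).subtype ∘ₗ DFinsupp.lapply i ∘ₗ
    (DirectSum.decomposeLinearEquiv U).toLinearMap,
    fun i => ⟨fun v hv => ?_, fun j hji v hv => ?_⟩⟩
  · exact DirectSum.decompose_of_mem_same U hv
  · exact DirectSum.decompose_of_mem_ne U hv hji

namespace TDSetup

variable {q : K} {d : ℕ} {U : ℕ → Submodule K V} {R L A As : End K V} {E : ℕ → End K V}

def theta (q : K) (d i : ℕ) : K := q ^ (2 * (i : ℤ) - d)

def thetaStar (q : K) (d i : ℕ) : K := q ^ ((d : ℤ) - 2 * (i : ℤ))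

lemma theta_injective (hq : q ≠ 0) (hq1 : ∀ n : ℕ, 0 < n → q ^ n ≠ 1) :
    Function.Injective (theta q d) := fun i j h => by
  have := zpow_injective_of_pow_ne_one hq hq1 h
  omega

lemma thetaStar_injective (hq : q ≠ 0) (hq1 : ∀ n : ℕ, 0 < n → q ^ n ≠ 1) :
    Function.Injective (thetaStar q d) := fun i j h => by
  have := zpow_injective_of_pow_ne_one hq hq1 h
  omega

lemma theta_eq (hq : q ≠ 0) (i : ℕ) : theta q d i = (q ^ i) ^ 2 / q ^ d := by
  rw [theta, zpow_sub₀ hq, zpow_mul]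
  norm_cast
  ring

lemma thetaStar_eq (hq : q ≠ 0) (i : ℕ) : thetaStar q d i = q ^ d / (q ^ i) ^ 2 := by
  rw [thetaStar, zpow_sub₀ hq, zpow_mul]
  norm_cast
  ring

lemma theta_ne_zero (hq : q ≠ 0) (i : ℕ) : theta q d i ≠ 0 := zpow_ne_zero _ hq

lemma thetaStar_ne_zero (hq : q ≠ 0) (i : ℕ) : thetaStar q d i ≠ 0 := zpow_ne_zero _ hq

lemma theta_succ (hq : q ≠ 0) (i : ℕ) : theta q d (i + 1) = q ^ 2 * theta q d i := by
  rw [theta_eq hq, theta_eq hq]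
  ring

lemma thetaStar_succ (hq : q ≠ 0) (i : ℕ) :
    thetaStar q d i = q ^ 2 * thetaStar q d (i + 1) := by
  rw [thetaStar_eq hq, thetaStar_eq hq]
  field_simp
  ring

lemma sub_theta_mul_sub_thetaStar (hq : q ≠ 0) (hq2 : q ^ 2 ≠ 1) (n : ℕ) :
    (theta q d 0 - theta q d n) * (thetaStar q d 0 - thetaStar q d n) =
      -(qInt q n * (q - q⁻¹)) ^ 2 := by
  rw [qInt, div_mul_cancel₀ _ (sub_inv_ne_zero_of_sq_ne_one hq hq2), theta_eq hq, theta_eq hq,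
    thetaStar_eq hq, thetaStar_eq hq, inv_pow]
  field_simp
  ring

def coeff (q : K) (d i : ℕ) : K :=
  ∏ k ∈ Finset.range i, (theta q d 0 - theta q d (k + 1))⁻¹

def coeffStar (q : K) (d i : ℕ) : K :=
  ∏ k ∈ Finset.range i, (thetaStar q d 0 - thetaStar q d (k + 1))⁻¹

lemma coeff_succ (i : ℕ) :
    coeff q d (i + 1) = coeff q d i * (theta q d 0 - theta q d (i + 1))⁻¹ :=
  Finset.prod_range_succ _ _

lemma coeffStar_succ (i : ℕ) :
    coeffStar q d (i + 1) = coeffStar q d i * (thetaStar q d 0 - thetaStar q d (i + 1))⁻¹ :=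
  Finset.prod_range_succ _ _

lemma coeff_mul_coeffStar (hq : q ≠ 0) (hq2 : q ^ 2 ≠ 1) (i : ℕ) :
    coeff q d i * coeffStar q d i =
      (-1 : K) ^ i * q ^ i * ((qFac q i) ^ 2)⁻¹ * (q⁻¹ * ((q - q⁻¹) ^ 2)⁻¹) ^ i := by
  induction i with
  | zero => simp [coeff, coeffStar, qFac]
  | succ i ih =>
    have hstep := sub_theta_mul_sub_thetaStar (d := d) hq hq2 (i + 1)
    rw [coeff_succ, coeffStar_succ, mul_mul_mul_comm, ih, ← mul_inv (theta q d 0 - _), hstep,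
      qFac_succ]
    generalize q - q⁻¹ = b
    linear_combination (-((-1 : K) ^ i * q ^ i * ((qFac q i) ^ 2)⁻¹ *
      (q⁻¹ * (b ^ 2)⁻¹) ^ i * (-(qInt q (i + 1) * b) ^ 2)⁻¹)) * mul_inv_cancel₀ hq

lemma iSup_eq_top (hS : TDSetup q d U R L A As) : ⨆ i, U i = ⊤ := hS.1.2.2.1

lemma eq_bot (hS : TDSetup q d U R L A As) {i : ℕ} (hi : d < i) : U i = ⊥ := hS.1.2.1 i hi

lemma ne_bot (hS : TDSetup q d U R L A As) {i : ℕ} (hi : i ≤ d) : U i ≠ ⊥ := hS.1.1 i hi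

lemma R_mem (hS : TDSetup q d U R L A As) {i : ℕ} {x : V} (hx : x ∈ U i) : R x ∈ U (i + 1) :=
  hS.2.1 i ⟨x, hx, rfl⟩

lemma L_mem (hS : TDSetup q d U R L A As) {i : ℕ} {x : V} (hx : x ∈ U (i + 1)) : L x ∈ U i :=
  hS.2.2.1 i ⟨x, hx, rfl⟩

lemma L_eq_zero (hS : TDSetup q d U R L A As) {x : V} (hx : x ∈ U 0) : L x = 0 :=
  hS.2.2.2.1 x hx

lemma A_apply (hS : TDSetup q d U R L A As) {i : ℕ} {x : V} (hx : x ∈ U i) :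
    A x = R x + theta q d i • x :=
  hS.2.2.2.2.1 i x hx

lemma As_apply (hS : TDSetup q d U R L A As) {i : ℕ} {x : V} (hx : x ∈ U i) :
    As x = L x + thetaStar q d i • x :=
  hS.2.2.2.2.2 i x hx

lemma L_mem_pred (hS : TDSetup q d U R L A As) {i : ℕ} {x : V} (hx : x ∈ U i) :
    L x ∈ U (i - 1) := by
  cases i with
  | zero => simp [hS.L_eq_zero hx]
  | succ i => exact hS.L_mem hx

lemma ext {M : Type*} [AddCommGroup M] [Module K M] (hS : TDSetup q d U R L A As)
    {f g : V →ₗ[K] M} (h : ∀ i, ∀ x ∈ U i, f x = g x) : f = g :=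
  LinearMap.ext_on (s := ⋃ i, (U i : Set V)) (by rw [← Submodule.iSup_eq_span, hS.iSup_eq_top])
    fun x hx => by
      obtain ⟨i, hi⟩ := Set.mem_iUnion.mp hx
      exact h i x hi

lemma eq_zero_of_lt (hS : TDSetup q d U R L A As) {i : ℕ} (hi : d < i) {x : V} (hx : x ∈ U i) :
    x = 0 := by
  rwa [hS.eq_bot hi, Submodule.mem_bot] at hx

lemma proj_mem (hS : TDSetup q d U R L A As) (hE : IsProjFamily U E) (i : ℕ) (x : V) :
    E i x ∈ U i := by
  have hx : x ∈ ⨆ j, U j := hS.iSup_eq_top ▸ Submodule.mem_top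
  refine Submodule.iSup_induction U (motive := fun x => E i x ∈ U i) hx (fun j y hy => ?_)
    (by simp) fun y z hy hz => by rw [map_add]; exact add_mem hy hz
  rw [hE.apply_of_mem hy]
  split_ifs with h
  · exact h ▸ hy
  · exact zero_mem _

lemma sum_proj (hS : TDSetup q d U R L A As) (hE : IsProjFamily U E) (x : V) :
    ∑ i ∈ Finset.range (d + 1), E i x = x := by
  have h : ∑ i ∈ Finset.range (d + 1), E i = LinearMap.id := hS.ext fun j y hy => by
    by_cases hj : j ≤ d
    · simp [LinearMap.sum_apply, hE.apply_of_mem hy, Nat.lt_succ_of_le hj]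
    · simp [hS.eq_zero_of_lt (not_le.mp hj) hy]
  simpa using congr($h x)

lemma proj_zero_comp_A (hS : TDSetup q d U R L A As) (hE : IsProjFamily U E) :
    E 0 ∘ₗ A = theta q d 0 • E 0 := hS.ext fun j x hx => by
  simp only [LinearMap.comp_apply, LinearMap.smul_apply, hS.A_apply hx, map_add, map_smul,
    hE.apply_of_mem hx, hE.apply_of_mem (hS.R_mem hx)]
  split_ifs <;> simp_all

lemma proj_succ_comp_A (hS : TDSetup q d U R L A As) (hE : IsProjFamily U E) (i : ℕ) :
    E (i + 1) ∘ₗ A = R ∘ₗ E i + theta q d (i + 1) • E (i + 1) := hS.ext fun j x hx => by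
  simp only [LinearMap.comp_apply, LinearMap.add_apply, LinearMap.smul_apply, hS.A_apply hx,
    map_add, map_smul, hE.apply_of_mem hx, hE.apply_of_mem (hS.R_mem hx)]
  split_ifs <;> simp_all

lemma proj_comp_As (hS : TDSetup q d U R L A As) (hE : IsProjFamily U E) (i : ℕ) :
    E i ∘ₗ As = L ∘ₗ E (i + 1) + thetaStar q d i • E i := hS.ext fun j x hx => by
  simp only [LinearMap.comp_apply, LinearMap.add_apply, LinearMap.smul_apply, hS.As_apply hx,
    map_add, map_smul, hE.apply_of_mem hx]
  rcases j with _ | j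
  · rw [hS.L_eq_zero hx]
    split_ifs <;> simp_all
  · rw [hE.apply_of_mem (hS.L_mem hx)]
    split_ifs <;> simp_all

lemma aeval_A_eq_zero (hS : TDSetup q d U R L A As) :
    aeval A (∏ k ∈ Finset.range (d + 1), (X - C (theta q d k))) = 0 := by
  refine aeval_prod_X_sub_C_eq_zero_of_flag (F := fun k => ⨆ (j) (_ : k ≤ j), U j) ?_
    (iSup₂_eq_bot.mpr fun _ => hS.eq_bot) fun k _ => iSup₂_le fun j hj x hx => ?_
  · rw [eq_top_iff, ← hS.iSup_eq_top]
    exact iSup_le fun j => le_iSup₂_of_le j (Nat.zero_le j) le_rfl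
  have hmem : ∀ i, k + 1 ≤ i → U i ≤ ⨆ (j) (_ : k + 1 ≤ j), U j :=
    fun i hi => le_iSup₂_of_le i hi le_rfl
  rw [Submodule.mem_comap, LinearMap.sub_apply, LinearMap.smul_apply, End.one_apply,
    hS.A_apply hx, add_sub_assoc, ← sub_smul]
  refine add_mem (hmem _ (by omega) (hS.R_mem hx)) ?_
  rcases hj.eq_or_lt with rfl | hlt
  · simp
  · exact Submodule.smul_mem _ _ (hmem j hlt hx)

lemma aeval_As_eq_zero (hS : TDSetup q d U R L A As) :
    aeval As (∏ k ∈ Finset.range (d + 1), (X - C (thetaStar q d k))) = 0 := by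
  rw [← Finset.prod_range_reflect]
  refine aeval_prod_X_sub_C_eq_zero_of_flag (F := fun k => ⨆ (j) (_ : j + k ≤ d), U j) ?_
    (iSup₂_eq_bot.mpr fun j hj => absurd hj (by omega)) fun k _ => iSup₂_le fun j hj x hx => ?_
  · rw [eq_top_iff, ← hS.iSup_eq_top]
    refine iSup_le fun j => ?_
    by_cases hj : j ≤ d
    · exact le_iSup₂_of_le j (by omega) le_rfl
    · rw [hS.eq_bot (by omega : d < j)]
      exact bot_le
  have hmem : ∀ i, i + (k + 1) ≤ d → U i ≤ ⨆ (j) (_ : j + (k + 1) ≤ d), U j :=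
    fun i hi => le_iSup₂_of_le i hi le_rfl
  rw [Submodule.mem_comap, LinearMap.sub_apply, LinearMap.smul_apply, End.one_apply,
    hS.As_apply hx, add_sub_assoc, ← sub_smul]
  refine add_mem ?_ ?_
  · rcases j with _ | j
    · simp [hS.L_eq_zero hx]
    · exact hmem j (by omega) (hS.L_mem hx)
  · by_cases hjk : j = d + 1 - 1 - k
    · simp [hjk]
    · exact Submodule.smul_mem _ _ (hmem j (by omega) hx)

lemma iSup_eigenspace_As (hS : TDSetup q d U R L A As) (hq : q ≠ 0)
    (hq1 : ∀ n : ℕ, 0 < n → q ^ n ≠ 1) :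
    ⨆ k ∈ Finset.range (d + 1), As.eigenspace (thetaStar q d k) = ⊤ := by
  rw [← ker_aeval_prod_X_sub_C_eq_iSup_eigenspace As _ (thetaStar_injective hq hq1).injOn,
    hS.aeval_As_eq_zero, LinearMap.ker_zero]

lemma eigenspace_A_eq_bot (hS : TDSetup q d U R L A As) {ν : K}
    (hν : ∀ k ≤ d, theta q d k ≠ ν) : A.eigenspace ν = ⊥ :=
  eigenspace_eq_bot_of_aeval_eq_zero hS.aeval_A_eq_zero <| by
    rw [eval_prod, Finset.prod_ne_zero_iff]
    intro k hk
    rw [eval_sub, eval_X, eval_C]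
    exact sub_ne_zero.mpr (hν k (Nat.lt_succ_iff.mp (Finset.mem_range.mp hk))).symm

lemma eigenspace_As_zero_le (hS : TDSetup q d U R L A As) (hE : IsProjFamily U E) (hq : q ≠ 0)
    (hq1 : ∀ n : ℕ, 0 < n → q ^ n ≠ 1) : As.eigenspace (thetaStar q d 0) ≤ U 0 := by
  intro x hx
  have key : ∀ n i, d < i + n → 0 < i → E i x = 0 := by
    intro n
    induction n with
    | zero => exact fun i hi _ => hS.eq_zero_of_lt hi (hS.proj_mem hE i x)
    | succ n ih =>
      intro i hi hi0
      by_cases h : d < i + n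
      · exact ih i h hi0
      have h1 := congr($(hS.proj_comp_As hE i) x)
      simp only [LinearMap.comp_apply, LinearMap.add_apply, LinearMap.smul_apply,
        End.mem_eigenspace_iff.mp hx, map_smul, ih (i + 1) (by omega) (by omega), map_zero,
        zero_add] at h1
      by_contra hne
      exact (thetaStar_injective hq hq1).ne (by omega : 0 ≠ i) (smul_left_injective K hne h1)
  rw [← hS.sum_proj hE x, Finset.sum_eq_single 0 (fun i _ hi => key d i (by omega) (by omega))
    (by simp)]
  exact hS.proj_mem hE 0 x

lemma proj_of_mem_eigenspace_A (hS : TDSetup q d U R L A As) (hE : IsProjFamily U E)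
    (hq : q ≠ 0) (hq1 : ∀ n : ℕ, 0 < n → q ^ n ≠ 1) {x : V}
    (hx : x ∈ A.eigenspace (theta q d 0)) (i : ℕ) :
    E i x = coeff q d i • (R ^ i) (E 0 x) := by
  induction i with
  | zero => simp [coeff]
  | succ i ih =>
    have h1 := congr($(hS.proj_succ_comp_A hE i) x)
    simp only [LinearMap.comp_apply, LinearMap.add_apply, LinearMap.smul_apply,
      End.mem_eigenspace_iff.mp hx, map_smul] at h1
    have hne : theta q d 0 - theta q d (i + 1) ≠ 0 :=
      sub_ne_zero.mpr ((theta_injective hq hq1).ne (by omega))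
    have h2 : E (i + 1) x = (theta q d 0 - theta q d (i + 1))⁻¹ • R (E i x) := by
      rw [eq_inv_smul_iff₀ hne, sub_smul, h1, add_sub_cancel_right]
    rw [h2, ih, map_smul, smul_smul, coeff_succ, pow_succ', End.mul_apply, mul_comm]

def starProjZero (q : K) (d : ℕ) (L : End K V) (E : ℕ → End K V) : End K V :=
  ∑ i ∈ Finset.range (d + 1), coeffStar q d i • (L ^ i * E i)

def eps (q : K) (d : ℕ) (σ : ℕ → K) : K :=
  ∑ i ∈ Finset.range (d + 1),
    (-1 : K) ^ i * σ i * q ^ i * ((qFac q i) ^ 2)⁻¹ * (q⁻¹ * ((q - q⁻¹) ^ 2)⁻¹) ^ i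

lemma starProjZero_apply_of_mem (hE : IsProjFamily U E) {j : ℕ} (hj : j ≤ d) {x : V}
    (hx : x ∈ U j) : starProjZero q d L E x = coeffStar q d j • (L ^ j) x := by
  rw [starProjZero, LinearMap.sum_apply, Finset.sum_eq_single j]
  · simp [hE.apply_of_mem hx]
  · intro i _ hij
    simp [hE.apply_of_mem hx, Ne.symm hij]
  · exact fun hj' => absurd (Finset.mem_range.mpr (Nat.lt_succ_of_le hj)) hj'

lemma starProjZero_of_mem_zero (hE : IsProjFamily U E) {x : V} (hx : x ∈ U 0) :
    starProjZero q d L E x = x := by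
  simp [starProjZero_apply_of_mem hE (Nat.zero_le d) hx, coeffStar]

lemma starProjZero_comp_As (hS : TDSetup q d U R L A As) (hE : IsProjFamily U E) (hq : q ≠ 0)
    (hq1 : ∀ n : ℕ, 0 < n → q ^ n ≠ 1) :
    starProjZero q d L E ∘ₗ As = thetaStar q d 0 • starProjZero q d L E :=
  hS.ext fun j x hx => by
  by_cases hdj : d < j
  · simp [hS.eq_zero_of_lt hdj hx]
  have hj := not_lt.mp hdj
  rw [LinearMap.comp_apply, LinearMap.smul_apply, hS.As_apply hx, map_add, map_smul,
    starProjZero_apply_of_mem hE hj hx]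
  rcases j with _ | j
  · simp [hS.L_eq_zero hx]
  · have hne : thetaStar q d 0 - thetaStar q d (j + 1) ≠ 0 :=
      sub_ne_zero.mpr ((thetaStar_injective hq hq1).ne (by omega))
    rw [starProjZero_apply_of_mem hE (by omega) (hS.L_mem hx), ← End.mul_apply, ← pow_succ,
      smul_smul, smul_smul, ← add_smul, coeffStar_succ]
    congr 1
    field_simp
    ring

lemma starProjZero_of_mem_eigenspace_A (hS : TDSetup q d U R L A As) (hE : IsProjFamily U E)
    (hq : q ≠ 0) (hq1 : ∀ n : ℕ, 0 < n → q ^ n ≠ 1) {σ : ℕ → K}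
    (hσ : ∀ i, i ≤ d → ∀ u ∈ U 0, (L ^ i * R ^ i) u = σ i • u) {x : V}
    (hx : x ∈ A.eigenspace (theta q d 0)) :
    starProjZero q d L E x = eps q d σ • E 0 x := by
  simp only [starProjZero, eps, LinearMap.sum_apply, LinearMap.smul_apply, Finset.sum_smul]
  refine Finset.sum_congr rfl fun i hi => ?_
  rw [End.mul_apply, hS.proj_of_mem_eigenspace_A hE hq hq1 hx, map_smul, ← End.mul_apply,
    hσ i (Nat.lt_succ_iff.mp (Finset.mem_range.mp hi)) _ (hS.proj_mem hE 0 x), smul_smul,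
    smul_smul, mul_comm (coeffStar q d i), coeff_mul_coeffStar hq (hq1 2 two_pos)]
  ring_nf

lemma span_eq_top_of_homogeneous {Kop : End K V}
    (hK : ∀ i, ∀ u ∈ U i, Kop u = theta q d i • u)
    (hBirr : ∀ W' : Submodule K V, Submodule.map R W' ≤ W' → Submodule.map L W' ≤ W' →
      Submodule.map Kop W' ≤ W' → W' = ⊥ ∨ W' = ⊤)
    {H : Set V} (hH : ∀ x ∈ H, ∃ i, x ∈ U i) (hR : ∀ x ∈ H, R x ∈ Submodule.span K H)
    (hL : ∀ x ∈ H, L x ∈ Submodule.span K H) (hne : Submodule.span K H ≠ ⊥) :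
    Submodule.span K H = ⊤ := by
  refine (hBirr _ ((Submodule.map_span_le _ _ _).mpr hR) ((Submodule.map_span_le _ _ _).mpr hL)
    ((Submodule.map_span_le _ _ _).mpr fun x hx => ?_)).resolve_left hne
  obtain ⟨i, hi⟩ := hH x hx
  rw [hK i x hi]
  exact Submodule.smul_mem _ _ (Submodule.subset_span hx)

lemma span_proj_eq_top (hS : TDSetup q d U R L A As) (hE : IsProjFamily U E)
    {Kop : End K V} (hK : ∀ i, ∀ u ∈ U i, Kop u = theta q d i • u)
    (hBirr : ∀ W' : Submodule K V, Submodule.map R W' ≤ W' → Submodule.map L W' ≤ W' →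
      Submodule.map Kop W' ≤ W' → W' = ⊥ ∨ W' = ⊤)
    {W : Submodule K V} (hWA : W.map A ≤ W) (hWAs : W.map As ≤ W) (hW : W ≠ ⊥) :
    Submodule.span K {y | ∃ i, ∃ w ∈ W, E i w = y} = ⊤ := by
  have hHW : ∀ i, ∀ w ∈ W, E i w ∈ Submodule.span K {y | ∃ i, ∃ w ∈ W, E i w = y} :=
    fun i w hw => Submodule.subset_span ⟨i, w, hw, rfl⟩
  refine span_eq_top_of_homogeneous hK hBirr ?_ ?_ ?_ ?_
  · rintro _ ⟨i, w, -, rfl⟩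
    exact ⟨i, hS.proj_mem hE i w⟩
  · rintro _ ⟨i, w, hw, rfl⟩
    have h := congr($(hS.proj_succ_comp_A hE i) w)
    rw [LinearMap.comp_apply, LinearMap.add_apply, LinearMap.comp_apply, LinearMap.smul_apply,
      ← sub_eq_iff_eq_add] at h
    rw [← h]
    exact sub_mem (hHW _ _ (hWA ⟨w, hw, rfl⟩)) (Submodule.smul_mem _ _ (hHW _ _ hw))
  · rintro _ ⟨_ | i, w, hw, rfl⟩
    · rw [hS.L_eq_zero (hS.proj_mem hE 0 w)]
      exact zero_mem _
    · have h := congr($(hS.proj_comp_As hE i) w)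
      rw [LinearMap.comp_apply, LinearMap.add_apply, LinearMap.comp_apply, LinearMap.smul_apply,
        ← sub_eq_iff_eq_add] at h
      rw [← h]
      exact sub_mem (hHW _ _ (hWAs ⟨w, hw, rfl⟩)) (Submodule.smul_mem _ _ (hHW _ _ hw))
  · obtain ⟨w, hw, hw0⟩ := Submodule.ne_bot_iff _ |>.mp hW
    intro hbot
    refine hw0 (hS.sum_proj hE w ▸ Finset.sum_eq_zero fun i _ => ?_)
    simpa [hbot] using hHW i w hw

lemma exists_proj_zero_ne_zero (hS : TDSetup q d U R L A As) (hE : IsProjFamily U E)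
    {Kop : End K V} (hK : ∀ i, ∀ u ∈ U i, Kop u = theta q d i • u)
    (hBirr : ∀ W' : Submodule K V, Submodule.map R W' ≤ W' → Submodule.map L W' ≤ W' →
      Submodule.map Kop W' ≤ W' → W' = ⊥ ∨ W' = ⊤)
    {W : Submodule K V} (hWA : W.map A ≤ W) (hWAs : W.map As ≤ W) (hW : W ≠ ⊥) :
    ∃ w ∈ W, E 0 w ≠ 0 := by
  by_contra! h
  obtain ⟨u, hu, hu0⟩ := Submodule.ne_bot_iff _ |>.mp (hS.ne_bot (Nat.zero_le d))
  have hker : Submodule.span K {y | ∃ i, ∃ w ∈ W, E i w = y} ≤ LinearMap.ker (E 0) :=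
    Submodule.span_le.mpr <| by
      rintro _ ⟨i, w, hw, rfl⟩
      rw [SetLike.mem_coe, LinearMap.mem_ker, hE.apply_of_mem (hS.proj_mem hE i w)]
      split_ifs with hi
      · exact hi ▸ h w hw
      · rfl
  rw [hS.span_proj_eq_top hE hK hBirr hWA hWAs hW] at hker
  exact hu0 ((hE 0).1 u hu ▸ hker Submodule.mem_top)

lemma eq_top_of_mem_of_mem_U (hS : TDSetup q d U R L A As)
    {Kop : End K V} (hK : ∀ i, ∀ u ∈ U i, Kop u = theta q d i • u)
    (hBirr : ∀ W' : Submodule K V, Submodule.map R W' ≤ W' → Submodule.map L W' ≤ W' →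
      Submodule.map Kop W' ≤ W' → W' = ⊥ ∨ W' = ⊤)
    {W : Submodule K V} (hWA : W.map A ≤ W) (hWAs : W.map As ≤ W) {i : ℕ} {x : V}
    (hxW : x ∈ W) (hxU : x ∈ U i) (hx : x ≠ 0) : W = ⊤ := by
  set H : Set V := {y | y ∈ W ∧ ∃ j, y ∈ U j}
  have htop : Submodule.span K H = ⊤ := by
    refine span_eq_top_of_homogeneous hK hBirr (fun y hy => hy.2) ?_ ?_ ?_
    · rintro y ⟨hyW, j, hyU⟩
      refine Submodule.subset_span ⟨?_, j + 1, hS.R_mem hyU⟩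
      rw [show R y = A y - theta q d j • y by rw [hS.A_apply hyU, add_sub_cancel_right]]
      exact sub_mem (hWA ⟨y, hyW, rfl⟩) (Submodule.smul_mem _ _ hyW)
    · rintro y ⟨hyW, j, hyU⟩
      refine Submodule.subset_span ⟨?_, j - 1, hS.L_mem_pred hyU⟩
      rw [show L y = As y - thetaStar q d j • y by rw [hS.As_apply hyU, add_sub_cancel_right]]
      exact sub_mem (hWAs ⟨y, hyW, rfl⟩) (Submodule.smul_mem _ _ hyW)
    · exact Submodule.ne_bot_iff _ |>.mpr ⟨x, Submodule.subset_span ⟨hxW, i, hxU⟩, hx⟩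
  exact eq_top_iff.mpr (htop ▸ Submodule.span_le.mpr fun y hy => hy.1)

lemma eq_bot_or_eq_top_of_eps_ne_zero (hS : TDSetup q d U R L A As) (hE : IsProjFamily U E)
    (hq : q ≠ 0) (hq1 : ∀ n : ℕ, 0 < n → q ^ n ≠ 1)
    {Kop : End K V} (hK : ∀ i, ∀ u ∈ U i, Kop u = theta q d i • u)
    (hBirr : ∀ W' : Submodule K V, Submodule.map R W' ≤ W' → Submodule.map L W' ≤ W' →
      Submodule.map Kop W' ≤ W' → W' = ⊥ ∨ W' = ⊤)
    {σ : ℕ → K} (hσ : ∀ i, i ≤ d → ∀ u ∈ U 0, (L ^ i * R ^ i) u = σ i • u)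
    (hε : eps q d σ ≠ 0) {W : Submodule K V} (hWA : W.map A ≤ W) (hWAs : W.map As ≤ W) :
    W = ⊥ ∨ W = ⊤ := by
  refine or_iff_not_imp_left.mpr fun hW => ?_
  have h0 : 0 ∈ Finset.range (d + 1) := Finset.mem_range.mpr d.succ_pos
  obtain ⟨w, hwW, hw⟩ := hS.exists_proj_zero_ne_zero hE hK hBirr hWA hWAs hW
  obtain ⟨y, hy, hy0⟩ := exists_mem_inf_eigenspace_apply_ne_zero
    (theta_injective hq hq1).injOn hS.aeval_A_eq_zero h0 (hS.proj_zero_comp_A hE)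
    (Submodule.map_le_iff_le_comap.mp hWA) hwW hw
  obtain ⟨z, hz, hz0⟩ := exists_mem_inf_eigenspace_apply_ne_zero
    (thetaStar_injective hq hq1).injOn hS.aeval_As_eq_zero h0 (hS.starProjZero_comp_As hE hq hq1)
    (Submodule.map_le_iff_le_comap.mp hWAs) hy.1
    (by rw [hS.starProjZero_of_mem_eigenspace_A hE hq hq1 hσ hy.2]; exact smul_ne_zero hε hy0)
  have hzU := hS.eigenspace_As_zero_le hE hq hq1 hz.2
  rw [starProjZero_of_mem_zero hE hzU] at hz0
  exact hS.eq_top_of_mem_of_mem_U hK hBirr hWA hWAs hz.1 hzU hz0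

lemma map_A_eigenspace_As_le (hq : q ≠ 0) (hq1 : ∀ n : ℕ, 0 < n → q ^ n ≠ 1)
    (hSerre : As ^ 3 * A - qInt q 3 • (As ^ 2 * A * As) + qInt q 3 • (As * A * As ^ 2) -
      A * As ^ 3 = 0) (j : ℕ) :
    (As.eigenspace (thetaStar q d (j + 1))).map A ≤ eigenspacesGE As (thetaStar q d) j := by
  refine (map_eigenspace_le_of_qSerre hq (hq1 4 (by norm_num)) (thetaStar_ne_zero hq _)
    hSerre).trans (sup_le (sup_le ?_ ?_) ?_)
  · rw [← thetaStar_succ hq]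
    exact eigenspace_le_eigenspacesGE le_rfl
  · exact eigenspace_le_eigenspacesGE j.le_succ
  · have h : q⁻¹ ^ 2 * thetaStar q d (j + 1) = thetaStar q d (j + 2) := by
      rw [thetaStar_succ hq (j + 1)]
      field_simp
    rw [h]
    exact eigenspace_le_eigenspacesGE (by omega)

lemma map_As_eigenspace_A_le (hS : TDSetup q d U R L A As) (hq : q ≠ 0)
    (hq1 : ∀ n : ℕ, 0 < n → q ^ n ≠ 1)
    (hSerre : A ^ 3 * As - qInt q 3 • (A ^ 2 * As * A) + qInt q 3 • (A * As * A ^ 2) -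
      As * A ^ 3 = 0) (j : ℕ) :
    (A.eigenspace (theta q d j)).map As ≤ eigenspacesLE A (theta q d) (j + 1) := by
  refine (map_eigenspace_le_of_qSerre hq (hq1 4 (by norm_num)) (theta_ne_zero hq _)
    hSerre).trans (sup_le (sup_le ?_ ?_) ?_)
  · rw [← theta_succ hq]
    exact eigenspace_le_eigenspacesLE le_rfl
  · exact eigenspace_le_eigenspacesLE j.le_succ
  · rcases j with _ | j
    · refine (hS.eigenspace_A_eq_bot fun k _ h => ?_).le.trans bot_le
      have h' : theta q d (k + 1) = theta q d 0 := by
        rw [theta_succ hq, h]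
        field_simp
      exact absurd (theta_injective hq hq1 h') (by omega)
    · have h : q⁻¹ ^ 2 * theta q d (j + 1) = theta q d j := by
        rw [theta_succ hq]
        field_simp
      rw [h]
      exact eigenspace_le_eigenspacesLE (by omega)

lemma map_A_eigenspacesGE_le (hq : q ≠ 0) (hq1 : ∀ n : ℕ, 0 < n → q ^ n ≠ 1)
    (hSerre : As ^ 3 * A - qInt q 3 • (As ^ 2 * A * As) + qInt q 3 • (As * A * As ^ 2) -
      A * As ^ 3 = 0) (k : ℕ) :
    (eigenspacesGE As (thetaStar q d) (k + 1)).map A ≤ eigenspacesGE As (thetaStar q d) k := by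
  rw [Submodule.map_le_iff_le_comap]
  refine iSup₂_le fun j hj => ?_
  obtain ⟨j, rfl⟩ := Nat.exists_eq_add_of_le' (Nat.one_le_of_lt hj)
  exact Submodule.map_le_iff_le_comap.mp
    ((map_A_eigenspace_As_le hq hq1 hSerre j).trans (eigenspacesGE_anti (by omega)))

lemma map_As_eigenspacesLE_le (hS : TDSetup q d U R L A As) (hq : q ≠ 0)
    (hq1 : ∀ n : ℕ, 0 < n → q ^ n ≠ 1)
    (hSerre : A ^ 3 * As - qInt q 3 • (A ^ 2 * As * A) + qInt q 3 • (A * As * A ^ 2) -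
      As * A ^ 3 = 0) (k : ℕ) :
    (eigenspacesLE A (theta q d) k).map As ≤ eigenspacesLE A (theta q d) (k + 1) := by
  rw [Submodule.map_le_iff_le_comap]
  exact iSup₂_le fun j hj => Submodule.map_le_iff_le_comap.mp
    ((hS.map_As_eigenspace_A_le hq hq1 hSerre j).trans (eigenspacesLE_mono (by omega)))

lemma eigenspacesGE_As_zero (hS : TDSetup q d U R L A As) (hq : q ≠ 0)
    (hq1 : ∀ n : ℕ, 0 < n → q ^ n ≠ 1) : eigenspacesGE As (thetaStar q d) 0 = ⊤ :=
  eq_top_iff.mpr <| (hS.iSup_eigenspace_As hq hq1).ge.trans <|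
    iSup₂_le fun j _ => eigenspace_le_eigenspacesGE (Nat.zero_le j)

lemma eigenspace_A_zero_ne_bot (hS : TDSetup q d U R L A As) (hE : IsProjFamily U E)
    (hq : q ≠ 0) (hq1 : ∀ n : ℕ, 0 < n → q ^ n ≠ 1) :
    A.eigenspace (theta q d 0) ≠ ⊥ := by
  obtain ⟨u, hu, hu0⟩ := Submodule.ne_bot_iff _ |>.mp (hS.ne_bot (Nat.zero_le d))
  obtain ⟨y, hy, hy0⟩ := exists_mem_inf_eigenspace_apply_ne_zero (W := ⊤)
    (theta_injective hq hq1).injOn hS.aeval_A_eq_zero (Finset.mem_range.mpr d.succ_pos)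
    (hS.proj_zero_comp_A hE) le_top Submodule.mem_top (x := u) (by rwa [(hE 0).1 u hu])
  exact Submodule.ne_bot_iff _ |>.mpr ⟨y, hy.2, fun h => hy0 (by simp [h])⟩

lemma splitSum_le_ker_starProjZero (hS : TDSetup q d U R L A As) (hE : IsProjFamily U E)
    (hq : q ≠ 0) (hq1 : ∀ n : ℕ, 0 < n → q ^ n ≠ 1) {σ : ℕ → K}
    (hσ : ∀ i, i ≤ d → ∀ u ∈ U 0, (L ^ i * R ^ i) u = σ i • u)
    (hε : eps q d σ = 0) :
    splitSum A As (theta q d) (thetaStar q d) ≤ LinearMap.ker (starProjZero q d L E) := by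
  refine iSup_le fun k => ?_
  rcases k with _ | k
  · refine inf_le_left.trans fun x hx => ?_
    rw [eigenspacesLE_zero] at hx
    rw [LinearMap.mem_ker, hS.starProjZero_of_mem_eigenspace_A hE hq hq1 hσ hx, hε, zero_smul]
  · exact inf_le_right.trans (iSup₂_le fun j hj x hx => LinearMap.apply_eq_zero_of_comp_eq_smul
      (hS.starProjZero_comp_As hE hq hq1) ((thetaStar_injective hq hq1).ne (by omega)) hx)

lemma exists_invariant_of_eps_eq_zero (hS : TDSetup q d U R L A As) (hE : IsProjFamily U E)
    (hq : q ≠ 0) (hq1 : ∀ n : ℕ, 0 < n → q ^ n ≠ 1) (hserre : QSerre q A As)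
    {σ : ℕ → K} (hσ : ∀ i, i ≤ d → ∀ u ∈ U 0, (L ^ i * R ^ i) u = σ i • u)
    (hε : eps q d σ = 0) :
    ∃ W : Submodule K V, W.map A ≤ W ∧ W.map As ≤ W ∧ W ≠ ⊥ ∧ W ≠ ⊤ := by
  refine ⟨splitSum A As (theta q d) (thetaStar q d),
    map_splitSum_le_left (map_A_eigenspacesGE_le hq hq1 hserre.2),
    map_splitSum_le_right (hS.map_As_eigenspacesLE_le hq hq1 hserre.1), fun hbot => ?_,
    fun htop => ?_⟩
  · refine hS.eigenspace_A_zero_ne_bot hE hq hq1 (eq_bot_iff.mpr ?_)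
    calc A.eigenspace (theta q d 0)
        = eigenspacesLE A (theta q d) 0 ⊓ eigenspacesGE As (thetaStar q d) 0 := by
          rw [eigenspacesLE_zero, hS.eigenspacesGE_As_zero hq hq1, inf_top_eq]
      _ ≤ splitSum A As (theta q d) (thetaStar q d) := inf_le_splitSum 0
      _ = ⊥ := hbot
  · obtain ⟨u, hu, hu0⟩ := Submodule.ne_bot_iff _ |>.mp (hS.ne_bot (Nat.zero_le d))
    have hker := hS.splitSum_le_ker_starProjZero hE hq hq1 hσ hε
    rw [htop] at hker
    exact hu0 (starProjZero_of_mem_zero hE hu ▸ hker Submodule.mem_top)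

end TDSetup

end

theorem statement14_general {K : Type*} [Field K]
    (q : K) (hq : q ≠ 0) (hq1 : ∀ n : ℕ, 0 < n → q ^ n ≠ 1)
    {V : Type*} [AddCommGroup V] [Module K V]
    (d : ℕ) (U : ℕ → Submodule K V) (R L A As : Module.End K V)
    (hsetup : TDSetup q d U R L A As)
    (Kop : Module.End K V)
    (hK : ∀ i, ∀ u ∈ U i, Kop u = q ^ (2 * (i : ℤ) - d) • u)
    (hserre : QSerre q A As)
    (σ : ℕ → K) (hσ : ∀ i, i ≤ d → ∀ u ∈ U 0, (L ^ i * R ^ i) u = σ i • u)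
    (hBirr : ∀ W' : Submodule K V, Submodule.map R W' ≤ W' → Submodule.map L W' ≤ W' →
      Submodule.map Kop W' ≤ W' → W' = ⊥ ∨ W' = ⊤) :
    (∀ W : Submodule K V, Submodule.map A W ≤ W → Submodule.map As W ≤ W →
        W = ⊥ ∨ W = ⊤) ↔
      ∑ i ∈ Finset.range (d + 1),
        (-1 : K) ^ i * σ i * q ^ i * ((qFac q i) ^ 2)⁻¹ *
          (q⁻¹ * ((q - q⁻¹) ^ 2)⁻¹) ^ i ≠ 0 := by
  obtain ⟨E, hE⟩ := hsetup.1.exists_isProjFamily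
  refine ⟨fun hirr hε => ?_, fun hε W hWA hWAs =>
    hsetup.eq_bot_or_eq_top_of_eps_ne_zero hE hq hq1 hK hBirr hσ hε hWA hWAs⟩
  obtain ⟨W, hWA, hWAs, hbot, htop⟩ :=
    hsetup.exists_invariant_of_eps_eq_zero hE hq hq1 hserre hσ hε
  exact (hirr W hWA hWAs).elim hbot htop

/-- Proposition 12.1: assume moreover that `A, A*` satisfy the cubic `q`-Serre
relations, `dim U₀ = 1`, `Lⁱ Rⁱ` acts on `U₀` as the scalar `σ_i` for `0 ≤ i ≤ d`, and the only
subspaces of `V` invariant under each of `R, L, K` are `0` and `V`. Then `V` is irreducible under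
the pair `A, A*` if and only if `∑ (−1)ⁱ σ_i qⁱ ([i]_q!)⁻² (q⁻¹(q − q⁻¹)⁻²)ⁱ ≠ 0`. -/
theorem statement14 {K : Type*} [Field K] [IsAlgClosed K] [CharZero K]
    (q : K) (hq : q ≠ 0) (hq1 : ∀ n : ℕ, 0 < n → q ^ n ≠ 1)
    {V : Type*} [AddCommGroup V] [Module K V] [FiniteDimensional K V]
    (d : ℕ) (U : ℕ → Submodule K V) (R L A As : Module.End K V)
    (hsetup : TDSetup q d U R L A As)
    (Kop : Module.End K V)
    (hK : ∀ i, ∀ u ∈ U i, Kop u = q ^ (2 * (i : ℤ) - d) • u)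
    (hserre : QSerre q A As)
    (hU0 : Module.finrank K (U 0) = 1)
    (σ : ℕ → K) (hσ : ∀ i, i ≤ d → ∀ u ∈ U 0, (L ^ i * R ^ i) u = σ i • u)
    (hBirr : ∀ W' : Submodule K V, Submodule.map R W' ≤ W' → Submodule.map L W' ≤ W' →
      Submodule.map Kop W' ≤ W' → W' = ⊥ ∨ W' = ⊤) :
    (∀ W : Submodule K V, Submodule.map A W ≤ W → Submodule.map As W ≤ W →
        W = ⊥ ∨ W = ⊤) ↔
      ∑ i ∈ Finset.range (d + 1),
        (-1 : K) ^ i * σ i * q ^ i * ((qFac q i) ^ 2)⁻¹ *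
          (q⁻¹ * ((q - q⁻¹) ^ 2)⁻¹) ^ i ≠ 0 :=
  statement14_general q hq hq1 d U R L A As hsetup Kop hK hserre σ hσ hBirr
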